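/- arXiv:1605.07769 — 4 statements merged into one kernel-verified Lean document; each statement's English description precedes it below -/
import Mathlib

section
/- Let H be an algebraic subgroup of an affine algebraic group G over a field k. If H is affine epimorphic in G, then O(G/H) = k, i.e., the only global regular functions on the quotient G/H are the constants. -/
open TensorProduct

/-!
We use the standard anti-equivalence between affine algebraic groups over a field `k`
and finitely generated commutative Hopf `k`-algebras.  An affine algebraic group `G`
corresponds to its Hopf algebra `A = O(G)`, a closed subgroup `H ⊂ G` to a surjective
Hopf algebra map `π : O(G) → O(H)`, a homomorphism `G → G'` to a Hopf algebra map
`O(G') → O(G)`, and a finite-dimensional `G`-module to a finite-dimensional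
`A`-comodule.  `O(G/H)` is identified with the right `H`-invariants of `O(G)`.
-/

/-- The right `H`-invariants `O(G)^H ⊆ O(G)`, i.e. `O(G/H)`, for the subgroup
corresponding to the surjection `π : O(G) → O(H)`. -/
def rightInvariants (k A B : Type) [Field k] [CommRing A] [HopfAlgebra k A]
    [CommRing B] [HopfAlgebra k B] (π : A →ₐc[k] B) : Set A :=
  {a | LinearMap.lTensor A (π : A →ₗ[k] B) (Coalgebra.comul (R := k) a) = a ⊗ₜ[k] (1 : B)}

/-- A (rational) representation of the affine group scheme with Hopf algebra `A`,
i.e. a right `A`-comodule structure on `V`. -/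
structure RationalRep (k A V : Type) [Field k] [CommRing A] [HopfAlgebra k A]
    [AddCommGroup V] [Module k V] where
  ρ : V →ₗ[k] V ⊗[k] A
  coassoc : (TensorProduct.assoc k V A A).toLinearMap ∘ₗ LinearMap.rTensor A ρ ∘ₗ ρ
      = LinearMap.lTensor V (Coalgebra.comul (R := k)) ∘ₗ ρ
  counit : (TensorProduct.rid k V).toLinearMap ∘ₗ
      LinearMap.lTensor V (Coalgebra.counit (R := k)) ∘ₗ ρ = LinearMap.id

/-- The fixed points `V^G` of a rational representation. -/
def RationalRep.fixedPoints {k A V : Type} [Field k] [CommRing A] [HopfAlgebra k A]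
    [AddCommGroup V] [Module k V] (r : RationalRep k A V) : Set V :=
  {v | r.ρ v = v ⊗ₜ[k] (1 : A)}

/-- The fixed points `V^H` of (the restriction to `H` of) a rational representation of
`G`, where `H` corresponds to the surjection `π : O(G) → O(H)`. -/
def RationalRep.fixedPointsUnder {k A B V : Type} [Field k] [CommRing A] [HopfAlgebra k A]
    [CommRing B] [HopfAlgebra k B] [AddCommGroup V] [Module k V]
    (π : A →ₐc[k] B) (r : RationalRep k A V) : Set V :=
  {v | LinearMap.lTensor V (π : A →ₗ[k] B) (r.ρ v) = v ⊗ₜ[k] (1 : B)}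

/-- `W` is a `G`-submodule of the representation `r`. -/
def RationalRep.IsSubrep {k A V : Type} [Field k] [CommRing A] [HopfAlgebra k A]
    [AddCommGroup V] [Module k V] (r : RationalRep k A V) (W : Submodule k V) : Prop :=
  ∀ v ∈ W, r.ρ v ∈ LinearMap.range (LinearMap.rTensor A W.subtype)

/-- `W` is an `H`-submodule of (the restriction of) the representation `r`, where `H`
corresponds to the surjection `π : O(G) → O(H)`. -/
def RationalRep.IsSubrepUnder {k A B V : Type} [Field k] [CommRing A] [HopfAlgebra k A]
    [CommRing B] [HopfAlgebra k B] [AddCommGroup V] [Module k V]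
    (π : A →ₐc[k] B) (r : RationalRep k A V) (W : Submodule k V) : Prop :=
  ∀ v ∈ W, LinearMap.lTensor V (π : A →ₗ[k] B) (r.ρ v) ∈
    LinearMap.range (LinearMap.rTensor B W.subtype)

/-- `H` is (affine) epimorphic in `G`: any two morphisms from `G` to an affine algebraic
group agreeing on `H` are equal.  In Hopf algebra terms: any two Hopf algebra maps
`O(G') → O(G)` with equal composites with `π : O(G) → O(H)` are equal. -/
def IsAffineEpimorphic (k A B : Type) [Field k] [CommRing A] [HopfAlgebra k A]
    [CommRing B] [HopfAlgebra k B] (π : A →ₐc[k] B) : Prop :=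
  ∀ (A' : Type) (_ : CommRing A') (_ : HopfAlgebra k A') (_ : Algebra.FiniteType k A')
    (φ₁ φ₂ : A' →ₐc[k] A), π.comp φ₁ = π.comp φ₂ → φ₁ = φ₂

/-!
Let `a ∈ O(G)^H`. It lies in a finite-dimensional subcomodule of `O(G)` with basis `e`, say
`Δ eᵢ = ∑ⱼ eⱼ ⊗ mⱼᵢ`, and then `Δ m = m ⊗ m`, `ε m = 1`. These matrix coefficients make
`O(G)[X₁, …, Xₙ]` the Hopf algebra of a semidirect product `G ⋉ 𝔾ₐⁿ`, and sections `G → G ⋉ 𝔾ₐⁿ`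
of the projection correspond to `1`-cocycles `t`. Writing `a = ∑ αᵢ eᵢ`, the coboundary
`tⱼ = αⱼ - ∑ᵢ αᵢ mⱼᵢ` vanishes on `H` because `a` is `H`-invariant, so the sections given by `t`
and by `0` agree on `H`. Since `H` is epimorphic they are equal, so `t = 0`: `a` is
`G`-invariant, and therefore `a = ε(a) • 1`.
-/

open Coalgebra (comul counit)
open scoped Coalgebra
open Bialgebra HopfAlgebra

theorem LinearIndependent.sum_tmul_injective {K V N ι : Type*} [Field K] [AddCommGroup V]
    [Module K V] [AddCommGroup N] [Module K N] [Fintype ι] {e : ι → V}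
    (he : LinearIndependent K e) : Function.Injective fun t : ι → N => ∑ i, e i ⊗ₜ[K] t i := by
  classical
  obtain ⟨g, hg⟩ := LinearMap.exists_extend he.repr
  have hge (i : ι) : g (e i) = Finsupp.single i 1 := by
    simpa [he.repr_eq_single i] using LinearMap.congr_fun hg ⟨e i, Submodule.subset_span ⟨i, rfl⟩⟩
  intro t u htu
  funext j
  simpa [hge, Finsupp.single_apply] using
    congrArg (fun x => TensorProduct.lid K N ((Finsupp.lapply j ∘ₗ g).rTensor N x)) htu

theorem LinearMap.lTensor_mem_range_rTensor {R M N N' : Type*} [CommSemiring R]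
    [AddCommMonoid M] [Module R M] [AddCommMonoid N] [Module R N] [AddCommMonoid N'] [Module R N']
    {W : Submodule R M} (g : N →ₗ[R] N') {x : M ⊗[R] N} (hx : x ∈ LinearMap.range (W.subtype.rTensor N)) :
    g.lTensor M x ∈ LinearMap.range (W.subtype.rTensor N') := by
  obtain ⟨w, rfl⟩ := hx
  refine ⟨g.lTensor W w, ?_⟩
  rw [← LinearMap.comp_apply, LinearMap.rTensor_comp_lTensor, ← LinearMap.lTensor_comp_rTensor]
  rfl

section Coalgebra

variable {R A : Type*} [CommSemiring R] [AddCommMonoid A] [Module R A] [Coalgebra R A]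

/-- In Sweedler notation, `Δ (a₁ f(a₂)) = a₁ ⊗ a₂ f(a₃)`. -/
theorem comul_rid_lTensor_comul (f : A →ₗ[R] R) (a : A) :
    comul ((TensorProduct.rid R A) (f.lTensor A (comul a))) =
      ((TensorProduct.rid R A).toLinearMap ∘ₗ f.lTensor A ∘ₗ comul).lTensor A (comul a) := by
  have hcomul (x : A ⊗[R] A) : comul ((TensorProduct.rid R A) (f.lTensor A x)) =
      TensorProduct.rid R (A ⊗[R] A) (f.lTensor _ (comul.rTensor A x)) := by
    induction x using TensorProduct.induction_on <;> simp_all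
  have hρ : (TensorProduct.rid R (A ⊗[R] A)).toLinearMap ∘ₗ f.lTensor (A ⊗[R] A) ∘ₗ
      (TensorProduct.assoc R A A A).symm.toLinearMap =
      ((TensorProduct.rid R A).toLinearMap ∘ₗ f.lTensor A).lTensor A := by
    ext
    simp
  rw [hcomul, ← Coalgebra.coassoc_symm_apply]
  simpa [LinearMap.lTensor_comp] using LinearMap.congr_fun hρ (comul.lTensor A (comul a))

theorem mem_of_comul_mem_range_rTensor {V : Submodule R A} {a : A}
    (h : comul (R := R) a ∈ LinearMap.range (V.subtype.rTensor A)) : a ∈ V := by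
  obtain ⟨w, hw⟩ := h
  have hε (w : V ⊗[R] A) : TensorProduct.rid R A (counit.lTensor A (V.subtype.rTensor A w)) =
      V.subtype (TensorProduct.rid R V (counit.lTensor V w)) := by
    induction w using TensorProduct.induction_on <;> simp_all
  have ha := hε w
  rw [hw, Coalgebra.lTensor_counit_comul, TensorProduct.rid_tmul, one_smul] at ha
  exact ha ▸ Submodule.coe_mem _

end Coalgebra

section Field

variable {k A : Type*} [Field k] [AddCommGroup A] [Module k A] [Coalgebra k A]

theorem exists_finiteDimensional_comul_mem_range_rTensor (a : A) :
    ∃ V : Submodule k A, FiniteDimensional k V ∧ a ∈ V ∧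
      ∀ v ∈ V, comul (R := k) v ∈ LinearMap.range (V.subtype.rTensor A) := by
  classical
  let ℬ := Module.Basis.ofVectorSpace k A
  let c := TensorProduct.equivFinsuppOfBasisRight ℬ (comul (R := k) a)
  let V := Submodule.span k (Set.range c)
  have hc : comul (R := k) a ∈ LinearMap.range (V.subtype.rTensor A) := by
    rw [← (TensorProduct.equivFinsuppOfBasisRight ℬ).symm_apply_apply (comul a),
      TensorProduct.equivFinsuppOfBasisRight_symm_apply]
    exact Submodule.finsuppSum_mem _ _ _ _ fun γ _ =>
      ⟨⟨c γ, Submodule.subset_span ⟨γ, rfl⟩⟩ ⊗ₜ ℬ γ, rfl⟩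
  have hV : V ≤ (LinearMap.range (V.subtype.rTensor A)).comap comul :=
    Submodule.span_le.2 <| Set.range_subset_iff.2 fun γ => by
      simp only [SetLike.mem_coe, Submodule.mem_comap, c,
        TensorProduct.equivFinsuppOfBasisRight_apply, comul_rid_lTensor_comul]
      exact LinearMap.lTensor_mem_range_rTensor _ hc
  exact ⟨V, FiniteDimensional.span_of_finite k c.finite_range,
    mem_of_comul_mem_range_rTensor hc, fun v hv => hV hv⟩

theorem exists_linearIndependent_comul_eq_sum (a : A) :
    ∃ (n : ℕ) (e : Fin n → A) (m : Fin n → Fin n → A), LinearIndependent k e ∧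
      a ∈ Submodule.span k (Set.range e) ∧ ∀ i, comul (R := k) (e i) = ∑ j, e j ⊗ₜ m j i := by
  obtain ⟨V, _, haV, hV⟩ := exists_finiteDimensional_comul_mem_range_rTensor (k := k) a
  let E := Module.finBasis k V
  have hcomul (i : _) : ∃ c : _ → A, comul (R := k) (E i : A) = ∑ j, (E j : A) ⊗ₜ c j := by
    obtain ⟨w, hw⟩ := hV _ (E i).2
    obtain ⟨c, rfl⟩ := TensorProduct.eq_repr_basis_left E w
    exact ⟨c, by simp [← hw, Finsupp.sum_fintype]⟩
  choose m hm using hcomul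
  refine ⟨_, fun i => E i, fun j i => m i j, E.linearIndependent.map' V.subtype V.ker_subtype,
    ?_, hm⟩
  rwa [show (fun i => (E i : A)) = V.subtype ∘ E from rfl, Set.range_comp, Submodule.span_image,
    E.span_eq, Submodule.map_top, Submodule.range_subtype]

end Field

/-- The matrix coefficients of a finite-dimensional comodule, i.e. of a morphism `G → GLₙ`. -/
structure IsComatrix {R A ι : Type*} [CommSemiring R] [AddCommMonoid A] [Module R A]
    [Coalgebra R A] [Fintype ι] [DecidableEq ι] (m : ι → ι → A) : Prop where
  comul_apply : ∀ i j, comul (R := R) (m i j) = ∑ l, m i l ⊗ₜ m l j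
  counit_apply : ∀ i j, counit (R := R) (m i j) = if i = j then 1 else 0

section LinearIndependent

variable {k A ι : Type*} [Field k] [AddCommGroup A] [Module k A] [Coalgebra k A] [Fintype ι]
  {e : ι → A} {m : ι → ι → A}

theorem isComatrix_of_linearIndependent [DecidableEq ι] (he : LinearIndependent k e)
    (hcomul : ∀ i, comul (R := k) (e i) = ∑ j, e j ⊗ₜ m j i) : IsComatrix (R := k) m := by
  constructor
  · intro j i
    have h := Coalgebra.coassoc_apply (R := k) (e i)
    simp only [hcomul, map_sum, LinearMap.rTensor_tmul, LinearMap.lTensor_tmul, sum_tmul,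
      TensorProduct.assoc_tmul] at h
    rw [Finset.sum_comm] at h
    simp only [← tmul_sum] at h
    exact (congrFun (he.sum_tmul_injective h) j).symm
  · intro j i
    have h := Coalgebra.lTensor_counit_comul (R := k) (e i)
    rw [hcomul, map_sum, show e i ⊗ₜ[k] (1 : k) = ∑ j, e j ⊗ₜ (if j = i then 1 else 0) by
      simp [tmul_ite]] at h
    exact congrFun (he.sum_tmul_injective h) j

theorem comul_sum_smul (hcomul : ∀ i, comul (R := k) (e i) = ∑ j, e j ⊗ₜ m j i) (α : ι → k) :
    comul (R := k) (∑ i, α i • e i) = ∑ j, e j ⊗ₜ ∑ i, α i • m j i := by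
  simp only [map_sum, map_smul, hcomul, Finset.smul_sum, tmul_sum, tmul_smul]
  exact Finset.sum_comm

theorem lTensor_comul_sum_smul_eq_tmul_iff (he : LinearIndependent k e)
    (hcomul : ∀ i, comul (R := k) (e i) = ∑ j, e j ⊗ₜ m j i) (α : ι → k) {N : Type*}
    [AddCommGroup N] [Module k N] (f : A →ₗ[k] N) (b : N) :
    f.lTensor A (comul (∑ i, α i • e i)) = (∑ i, α i • e i) ⊗ₜ b ↔
      ∀ j, f (∑ i, α i • m j i) = α j • b := by
  simp only [comul_sum_smul hcomul, map_sum, LinearMap.lTensor_tmul, sum_tmul, smul_tmul]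
  exact he.sum_tmul_injective.eq_iff.trans funext_iff

end LinearIndependent

theorem eq_algebraMap_counit_of_comul_eq_tmul_one {R A : Type*} [CommSemiring R] [Semiring A]
    [Bialgebra R A] {a : A} (h : comul (R := R) a = a ⊗ₜ 1) :
    a = algebraMap R A (counit (R := R) a) := by
  have h1 := Coalgebra.rTensor_counit_comul (R := R) a
  rw [h, LinearMap.rTensor_tmul] at h1
  simpa [Algebra.algebraMap_eq_smul_one] using (congrArg (TensorProduct.lid R A) h1).symm

theorem algebraMap_mem_rightInvariants {k A B : Type} [Field k] [CommRing A] [HopfAlgebra k A]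
    [CommRing B] [HopfAlgebra k B] (π : A →ₐc[k] B) (c : k) :
    algebraMap k A c ∈ rightInvariants k A B π := by
  simp [rightInvariants, Bialgebra.comul_algebraMap, Algebra.TensorProduct.algebraMap_apply]

namespace MvPolynomial

variable {R A S ι : Type*} [CommSemiring R] [CommSemiring A] [Algebra R A] [CommSemiring S]
  [Algebra R S]

noncomputable def liftAlgHom (f : A →ₐ[R] S) (v : ι → S) : MvPolynomial ι A →ₐ[R] S :=
  { eval₂Hom (f : A →+* S) v with
    commutes' := fun r => by
      simp [IsScalarTower.algebraMap_apply R A (MvPolynomial ι A), algebraMap_eq] }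

@[simp] lemma liftAlgHom_C (f : A →ₐ[R] S) (v : ι → S) (a : A) : liftAlgHom f v (C a) = f a :=
  eval₂_C _ _ _

@[simp] lemma liftAlgHom_X (f : A →ₐ[R] S) (v : ι → S) (i : ι) : liftAlgHom f v (X i) = v i :=
  eval₂_X _ _ _

@[simp] lemma liftAlgHom_comp_toAlgHom (f : A →ₐ[R] S) (v : ι → S) :
    (liftAlgHom f v).comp (IsScalarTower.toAlgHom R A (MvPolynomial ι A)) = f :=
  AlgHom.ext (liftAlgHom_C f v)

lemma comp_liftAlgHom {T : Type*} [CommSemiring T] [Algebra R T] (g : S →ₐ[R] T)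
    (f : A →ₐ[R] S) (v : ι → S) :
    g.comp (liftAlgHom f v) = liftAlgHom (g.comp f) (g ∘ v) :=
  AlgHom.coe_ringHom_injective (ringHom_ext (fun a => by simp) fun i => by simp)

lemma algHom_ext_of_comp_C {B : Type*} [Semiring B] [Algebra R B]
    {f g : MvPolynomial ι A →ₐ[R] B}
    (hC : f.toLinearMap ∘ₗ (IsScalarTower.toAlgHom R A (MvPolynomial ι A)).toLinearMap =
      g.toLinearMap ∘ₗ (IsScalarTower.toAlgHom R A (MvPolynomial ι A)).toLinearMap)
    (hX : ∀ i, f (X i) = g (X i)) : f = g :=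
  AlgHom.coe_ringHom_injective (ringHom_ext' (RingHom.ext (LinearMap.congr_fun hC)) hX)

end MvPolynomial

open MvPolynomial (C X liftAlgHom)

section Semidirect

variable {R A ι : Type*} [CommRing R] [CommRing A] [HopfAlgebra R A]

local notation "Cₐ" => (IsScalarTower.toAlgHom R A (MvPolynomial ι A))

variable (R A ι) in
noncomputable def semidirectCounit : MvPolynomial ι A →ₐ[R] R :=
  liftAlgHom (counitAlgHom R A) 0

@[simp] lemma semidirectCounit_C (a : A) : semidirectCounit R A ι (C a) = counit a :=
  MvPolynomial.liftAlgHom_C _ _ _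

@[simp] lemma semidirectCounit_X (j : ι) : semidirectCounit R A ι (X j) = 0 :=
  MvPolynomial.liftAlgHom_X _ _ _

lemma semidirectCounit_comp_C :
    (semidirectCounit R A ι).toLinearMap ∘ₗ (Cₐ).toLinearMap = counit := by
  rw [← AlgHom.comp_toLinearMap, semidirectCounit, MvPolynomial.liftAlgHom_comp_toAlgHom]
  rfl

variable [Fintype ι]

variable (R) in
/-- With this comultiplication `A[X]` is the Hopf algebra of the semidirect product of `G` with
the vector group `𝔾ₐⁿ`, with coordinates `Xⱼ`, on which `G` acts through `m`. -/
noncomputable def semidirectComul (m : ι → ι → A) :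
    MvPolynomial ι A →ₐ[R] MvPolynomial ι A ⊗[R] MvPolynomial ι A :=
  liftAlgHom ((Algebra.TensorProduct.map Cₐ Cₐ).comp (comulAlgHom R A))
    fun j => X j ⊗ₜ 1 + ∑ i, C (m j i) ⊗ₜ X i

variable (R) in
noncomputable def semidirectAntipode (m : ι → ι → A) : MvPolynomial ι A →ₐ[R] MvPolynomial ι A :=
  liftAlgHom ((Cₐ).comp (antipodeAlgHom R A)) fun j => -∑ i, C (antipode R (m j i)) * X i

@[simp] lemma semidirectComul_C (m : ι → ι → A) (a : A) :
    semidirectComul R m (C a) = Algebra.TensorProduct.map Cₐ Cₐ (comul a) :=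
  MvPolynomial.liftAlgHom_C _ _ _

@[simp] lemma semidirectComul_X (m : ι → ι → A) (j : ι) :
    semidirectComul R m (X j) = X j ⊗ₜ 1 + ∑ i, C (m j i) ⊗ₜ X i :=
  MvPolynomial.liftAlgHom_X _ _ _

@[simp] lemma semidirectAntipode_C (m : ι → ι → A) (a : A) :
    semidirectAntipode R m (C a) = C (antipode R a) :=
  MvPolynomial.liftAlgHom_C _ _ _

@[simp] lemma semidirectAntipode_X (m : ι → ι → A) (j : ι) :
    semidirectAntipode R m (X j) = -∑ i, C (antipode R (m j i)) * X i :=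
  MvPolynomial.liftAlgHom_X _ _ _

lemma semidirectComul_comp_C (m : ι → ι → A) :
    (semidirectComul R m).toLinearMap ∘ₗ (Cₐ).toLinearMap =
      TensorProduct.map (Cₐ).toLinearMap (Cₐ).toLinearMap ∘ₗ comul := by
  rw [← AlgHom.comp_toLinearMap, semidirectComul, MvPolynomial.liftAlgHom_comp_toAlgHom]
  rfl

lemma antipode_mul_comp_semidirectComul (m : ι → ι → A) :
    (Algebra.TensorProduct.lift (semidirectAntipode R m) (.id R _) fun _ _ ↦ Commute.all _ _).comp
      (semidirectComul R m) = (Algebra.ofId R _).comp (semidirectCounit R A ι) := by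
  refine MvPolynomial.algHom_ext_of_comp_C (LinearMap.ext fun x => ?_) fun j => ?_
  · simp only [LinearMap.comp_apply, AlgHom.toLinearMap_apply, AlgHom.comp_apply,
      IsScalarTower.coe_toAlgHom', MvPolynomial.algebraMap_eq, semidirectComul_C,
      semidirectCounit_C, ← (ℛ R x).eq, map_sum]
    simp only [Algebra.TensorProduct.map_tmul, Algebra.TensorProduct.lift_tmul,
      semidirectAntipode_C, AlgHom.id_apply, IsScalarTower.coe_toAlgHom',
      MvPolynomial.algebraMap_eq, ← MvPolynomial.C_mul, ← map_sum,
      sum_antipode_mul_eq_algebraMap_counit]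
    rfl
  · simp

/-- The `1`-cocycles of `G` with values in the representation with matrix coefficients `m`. -/
structure IsCocycle (m : ι → ι → A) (t : ι → A) : Prop where
  comul_apply : ∀ j, comul (R := R) (t j) = t j ⊗ₜ 1 + ∑ i, m j i ⊗ₜ t i
  counit_apply : ∀ j, counit (R := R) (t j) = 0

namespace IsCocycle

variable {m : ι → ι → A} {t : ι → A}

lemma zero (m : ι → ι → A) : IsCocycle (R := R) m 0 := ⟨by simp, by simp⟩

lemma counitAlgHom_comp_liftAlgHom (ht : IsCocycle (R := R) m t) :
    (counitAlgHom R A).comp (liftAlgHom (AlgHom.id R A) t) = semidirectCounit R A ι :=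
  MvPolynomial.algHom_ext_of_comp_C (LinearMap.ext fun x => by simp) fun j => by
    simp [ht.counit_apply]

lemma map_liftAlgHom_comp_semidirectComul (ht : IsCocycle (R := R) m t) :
    (Algebra.TensorProduct.map (liftAlgHom (AlgHom.id R A) t) (liftAlgHom (AlgHom.id R A) t)).comp
      (semidirectComul R m) = (comulAlgHom R A).comp (liftAlgHom (AlgHom.id R A) t) := by
  refine MvPolynomial.algHom_ext_of_comp_C (LinearMap.ext fun x => ?_) fun j => ?_
  · simp [← (ℛ R x).eq, map_sum]
  · simp [ht.comul_apply]

end IsCocycle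

namespace IsComatrix

variable [DecidableEq ι] {m : ι → ι → A}

noncomputable abbrev semidirectBialgebra (hm : IsComatrix (R := R) m) :
    Bialgebra R (MvPolynomial ι A) := by
  refine .ofAlgHom (semidirectComul R m) (semidirectCounit R A ι) ?_ ?_ ?_ <;>
    refine MvPolynomial.algHom_ext_of_comp_C ?_ fun j => ?_
  · simp only [coassoc_simps, AlgHom.comp_toLinearMap, Algebra.TensorProduct.toLinearMap_map,
      semidirectComul_comp_C]
    simp [coassoc_simps]
  · simp [add_tmul, sum_tmul, tmul_add, tmul_sum, hm.comul_apply, Algebra.TensorProduct.one_def,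
      add_assoc]
    rw [Finset.sum_add_distrib]
    exact congrArg _ Finset.sum_comm
  · simp only [coassoc_simps, AlgHom.comp_toLinearMap, Algebra.TensorProduct.toLinearMap_map,
      semidirectComul_comp_C, semidirectCounit_comp_C]
    rw [CoassocSimps.map_counit_comp_comul_left]
    rfl
  · simp [hm.counit_apply, ite_tmul]
  · simp only [coassoc_simps, AlgHom.comp_toLinearMap, Algebra.TensorProduct.toLinearMap_map,
      semidirectComul_comp_C, semidirectCounit_comp_C]
    rw [CoassocSimps.map_counit_comp_comul_right]
    rfl
  · simp

lemma sum_mul_antipode (hm : IsComatrix (R := R) m) (i j : ι) :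
    ∑ l, m i l * antipode R (m l j) = if i = j then 1 else 0 := by
  simpa [hm.comul_apply, hm.counit_apply, map_sum, apply_ite (algebraMap R A)] using
    mul_antipode_lTensor_comul_apply (R := R) (m i j)

lemma sum_C_mul_semidirectAntipode_X (hm : IsComatrix (R := R) m) (j : ι) :
    ∑ l, C (m j l) * semidirectAntipode R m (X l) = -X j :=
  calc ∑ l, C (m j l) * semidirectAntipode R m (X l)
      = -∑ i, C (∑ l, m j l * antipode R (m l i)) * X i := by
        simp [Finset.mul_sum, Finset.sum_mul, mul_assoc]
        exact Finset.sum_comm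
    _ = -X j := by simp [hm.sum_mul_antipode]

lemma mul_antipode_comp_semidirectComul (hm : IsComatrix (R := R) m) :
    (Algebra.TensorProduct.lift (.id R _) (semidirectAntipode R m) fun _ _ ↦ Commute.all _ _).comp
      (semidirectComul R m) = (Algebra.ofId R _).comp (semidirectCounit R A ι) := by
  refine MvPolynomial.algHom_ext_of_comp_C (LinearMap.ext fun x => ?_) fun j => ?_
  · simp only [LinearMap.comp_apply, AlgHom.toLinearMap_apply, AlgHom.comp_apply,
      IsScalarTower.coe_toAlgHom', MvPolynomial.algebraMap_eq, semidirectComul_C,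
      semidirectCounit_C, ← (ℛ R x).eq, map_sum]
    simp only [Algebra.TensorProduct.map_tmul, Algebra.TensorProduct.lift_tmul,
      semidirectAntipode_C, AlgHom.id_apply, IsScalarTower.coe_toAlgHom',
      MvPolynomial.algebraMap_eq, ← MvPolynomial.C_mul, ← map_sum,
      sum_mul_antipode_eq_algebraMap_counit]
    rfl
  · simp only [AlgHom.comp_apply, semidirectComul_X, semidirectCounit_X, map_add, map_sum,
      Algebra.TensorProduct.lift_tmul, AlgHom.id_apply, map_one, mul_one, map_zero,
      hm.sum_C_mul_semidirectAntipode_X, add_neg_cancel]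

noncomputable abbrev semidirectHopfAlgebra (hm : IsComatrix (R := R) m) :
    HopfAlgebra R (MvPolynomial ι A) :=
  letI := hm.semidirectBialgebra
  .ofAlgHom (semidirectAntipode R m) (antipode_mul_comp_semidirectComul m)
    hm.mul_antipode_comp_semidirectComul

lemma isCocycle_coboundary (hm : IsComatrix (R := R) m) (α : ι → R) :
    IsCocycle (R := R) m fun j => α j • (1 : A) - ∑ i, α i • m j i := by
  constructor
  · intro j
    simp only [hm.comul_apply, map_sub, map_smul, map_sum, Bialgebra.comul_one,
      Algebra.TensorProduct.one_def, tmul_sub, sub_tmul, sum_tmul, tmul_sum, Finset.smul_sum,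
      ← smul_tmul', tmul_smul, Finset.sum_sub_distrib]
    rw [sub_add_sub_cancel]
    exact congrArg _ Finset.sum_comm
  · intro j
    simp [hm.counit_apply]

end IsComatrix

variable [DecidableEq ι] {m : ι → ι → A} {t : ι → A}

/-- The section of `G ⋉ 𝔾ₐⁿ → G` given by a cocycle. `MvPolynomial ι A` already carries the
coalgebra structure of a monoid algebra, so the semidirect one has to be passed explicitly. -/
noncomputable def IsCocycle.toBialgHom (hm : IsComatrix (R := R) m)
    (ht : IsCocycle (R := R) m t) :
    @BialgHom R (MvPolynomial ι A) A _ _ _ _ _ hm.semidirectBialgebra.toCoalgebraStruct _ :=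
  @BialgHom.ofAlgHom R (MvPolynomial ι A) A _ _ _ hm.semidirectBialgebra _
    (liftAlgHom (AlgHom.id R A) t)
    (ht.counitAlgHom_comp_liftAlgHom.trans (AlgHom.toLinearMap_injective rfl))
    ((congrArg (Algebra.TensorProduct.map _ _).comp (AlgHom.toLinearMap_injective rfl)).trans
      ht.map_liftAlgHom_comp_semidirectComul)

@[simp] lemma IsCocycle.toBialgHom_apply (hm : IsComatrix (R := R) m)
    (ht : IsCocycle (R := R) m t) (x : MvPolynomial ι A) :
    ht.toBialgHom hm x = liftAlgHom (AlgHom.id R A) t x :=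
  rfl

end Semidirect

theorem IsAffineEpimorphic.apply_eq {k A B : Type} [Field k] [CommRing A]
    [HopfAlgebra k A] [CommRing B] [HopfAlgebra k B] {π : A →ₐc[k] B}
    (hepi : IsAffineEpimorphic k A B π) {A' : Type} [CommRing A'] (_ : HopfAlgebra k A')
    (hA' : Algebra.FiniteType k A') {φ₁ φ₂ : A' →ₐc[k] A} (h : ∀ x, π (φ₁ x) = π (φ₂ x))
    (x : A') : φ₁ x = φ₂ x :=
  DFunLike.congr_fun (hepi A' _ _ hA' φ₁ φ₂ (BialgHom.ext h)) x

theorem IsAffineEpimorphic.eq_zero_of_isCocycle {k A B : Type} [Field k] [CommRing A]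
    [HopfAlgebra k A] [CommRing B] [HopfAlgebra k B] {π : A →ₐc[k] B}
    (hepi : IsAffineEpimorphic k A B π) (hA : Algebra.FiniteType k A) {ι : Type} [Fintype ι]
    [DecidableEq ι] {m : ι → ι → A} (hm : IsComatrix (R := k) m) {t : ι → A}
    (ht : IsCocycle (R := k) m t) (hπt : ∀ j, π (t j) = 0) : t = 0 := by
  have hπφ (s : ι → A) (hs : IsCocycle (R := k) m s) (x : MvPolynomial ι A) :
      π (hs.toBialgHom hm x) = liftAlgHom (π : A →ₐ[k] B) (π ∘ s) x :=
    congr($(MvPolynomial.comp_liftAlgHom (π : A →ₐ[k] B) (AlgHom.id k A) s) x)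
  funext j
  have := hepi.apply_eq hm.semidirectHopfAlgebra (hA.trans inferInstance)
    (φ₁ := (IsCocycle.zero m).toBialgHom hm) (φ₂ := ht.toBialgHom hm) (fun x => ?_) (X j)
  · simpa using this.symm
  · rw [hπφ, hπφ]
    congr 2
    ext i
    simp [hπt]

theorem affineEpimorphic_implies_only_constant_invariants_general
    (k A B : Type) [Field k] [CommRing A] [HopfAlgebra k A] [CommRing B]
    [HopfAlgebra k B] (hA : Algebra.FiniteType k A)
    (π : A →ₐc[k] B)
    (hepi : IsAffineEpimorphic k A B π) :
    rightInvariants k A B π = Set.range (algebraMap k A) := by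
  refine Set.Subset.antisymm (fun a ha => ?_)
    (Set.range_subset_iff.2 (algebraMap_mem_rightInvariants π))
  obtain ⟨n, e, m, he, hea, hcomul⟩ := exists_linearIndependent_comul_eq_sum (k := k) a
  obtain ⟨α, rfl⟩ := (Submodule.mem_span_range_iff_exists_fun k).1 hea
  have hm := isComatrix_of_linearIndependent he hcomul
  have hH := (lTensor_comul_sum_smul_eq_tmul_iff he hcomul α (π : A →ₗ[k] B) 1).1 ha
  have ht := hepi.eq_zero_of_isCocycle hA hm (hm.isCocycle_coboundary α) fun j => by
    simpa [sub_eq_zero] using (hH j).symm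
  have hG := (lTensor_comul_sum_smul_eq_tmul_iff he hcomul α LinearMap.id 1).2 fun j =>
    (sub_eq_zero.1 (congrFun ht j)).symm
  exact ⟨_, (eq_algebraMap_counit_of_comul_eq_tmul_one (by simpa using hG)).symm⟩

/-- If `H` is affine epimorphic in the affine algebraic group `G`, then `O(G/H) = k`:
the right `H`-invariants of `O(G)` are exactly the constants. -/
theorem affineEpimorphic_implies_only_constant_invariants
    (k A B : Type) [Field k] [CommRing A] [HopfAlgebra k A] [CommRing B]
    [HopfAlgebra k B] (hA : Algebra.FiniteType k A) (hB : Algebra.FiniteType k B)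
    (π : A →ₐc[k] B) (hπ : Function.Surjective π)
    (hepi : IsAffineEpimorphic k A B π) :
    rightInvariants k A B π = Set.range (algebraMap k A) :=
  affineEpimorphic_implies_only_constant_invariants_general k A B hA π hepi
end

section
/- Let G be an affine algebraic group over a field k and H an algebraic subgroup such that V^H = V^G for every finite-dimensional G-module V. Then for every finite-dimensional G-module V and every direct sum decomposition V = V₁ ⊕ V₂ into H-submodules, both V₁ and V₂ are G-submodules. -/
open TensorProduct

/-!
The projection `e` of `V` onto `V₁` along `V₂` commutes with the action of `H`, so it is an
`H`-fixed vector of the conjugation representation of `G` on `End V`. By hypothesis it is then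
`G`-fixed, i.e. it commutes with the action of `G`, and its range `V₁` and kernel `V₂` are
`G`-stable.

To build the conjugation representation, fix a basis of `V`: the coaction becomes a
multiplicative matrix `C` over `O(G)` (`Δ Cᵢⱼ = ∑ₚ Cᵢₚ ⊗ Cₚⱼ`, `ε Cᵢⱼ = δᵢⱼ`), whose inverse is
`S(C)`. Then `S(C)ᵀ ⊗ₖ C` is again multiplicative, and since
`(S(C)ᵀ ⊗ₖ C) · vec E = vec (C E S(C))`, it describes conjugation of matrices by `C`.
-/

open Matrix
open scoped Kronecker

section Multiplicative

variable {k A ι : Type*} [CommRing k] [CommRing A] [Fintype ι] [DecidableEq ι]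

variable (k) in
structure Matrix.IsMultiplicative [Bialgebra k A] (C : Matrix ι ι A) : Prop where
  comul_apply : ∀ i j, Coalgebra.comul (R := k) (C i j) = ∑ p, C i p ⊗ₜ[k] C p j
  counit_apply : ∀ i j, Coalgebra.counit (R := k) (C i j) = (1 : Matrix ι ι k) i j

theorem Matrix.isMultiplicative_iff_map [Bialgebra k A] (C : Matrix ι ι A) :
    C.IsMultiplicative k ↔
      C.map (Bialgebra.comulAlgHom k A) =
          C.map (Algebra.TensorProduct.includeLeft (S := k)) *
            C.map Algebra.TensorProduct.includeRight ∧
        C.map (Bialgebra.counitAlgHom k A) = 1 := by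
  simp only [← Matrix.ext_iff, map_apply, mul_apply, Algebra.TensorProduct.includeLeft_apply,
    Algebra.TensorProduct.includeRight_apply, Algebra.TensorProduct.tmul_mul_tmul, mul_one,
    one_mul]
  exact ⟨fun ⟨h₁, h₂⟩ ↦ ⟨h₁, h₂⟩, fun ⟨h₁, h₂⟩ ↦ ⟨h₁, h₂⟩⟩

end Multiplicative

theorem Matrix.map_kronecker {α β l m n p F : Type*} [Mul α] [Mul β] [FunLike F α β]
    [MulHomClass F α β] (f : F) (B : Matrix l m α) (C : Matrix n p α) :
    (B ⊗ₖ C).map f = B.map f ⊗ₖ C.map f := by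
  ext
  simp

namespace Matrix.IsMultiplicative

variable {k A ι : Type*} [CommRing k] [CommRing A] [Fintype ι] [DecidableEq ι]

theorem kronecker {κ : Type*} [Fintype κ] [DecidableEq κ] [Bialgebra k A] {B : Matrix ι ι A}
    {C : Matrix κ κ A} (hB : B.IsMultiplicative k) (hC : C.IsMultiplicative k) :
    (B ⊗ₖ C).IsMultiplicative k := by
  rw [isMultiplicative_iff_map] at hB hC ⊢
  simp only [map_kronecker, hB.1, hC.1, hB.2, hC.2, mul_kronecker_mul, one_kronecker_one,
    and_self]

variable [HopfAlgebra k A] {C : Matrix ι ι A}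

theorem mul_map_antipode (hC : C.IsMultiplicative k) :
    C * C.map (HopfAlgebra.antipode k) = 1 := by
  ext i j
  have := HopfAlgebra.mul_antipode_lTensor_comul_apply (R := k) (C i j)
  simp only [hC.comul_apply, hC.counit_apply, map_sum, LinearMap.lTensor_tmul,
    LinearMap.mul'_apply] at this
  simpa [mul_apply, one_apply, apply_ite] using this

theorem map_antipode_mul (hC : C.IsMultiplicative k) :
    C.map (HopfAlgebra.antipode k) * C = 1 := by
  ext i j
  have := HopfAlgebra.mul_antipode_rTensor_comul_apply (R := k) (C i j)
  simp only [hC.comul_apply, hC.counit_apply, map_sum, LinearMap.rTensor_tmul,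
    LinearMap.mul'_apply] at this
  simpa [mul_apply, one_apply, apply_ite] using this

theorem transpose_map_antipode (hC : C.IsMultiplicative k) :
    (C.map (HopfAlgebra.antipode k))ᵀ.IsMultiplicative k := by
  set S := C.map (HopfAlgebra.antipode k)
  set L := Algebra.TensorProduct.includeLeft (R := k) (S := k) (A := A) (B := A)
  set R := Algebra.TensorProduct.includeRight (R := k) (A := A) (B := A)
  have hmap := (isMultiplicative_iff_map C).1 hC
  -- both sides are inverse to `C.map Δ = C.map L * C.map R`
  have comul_S : S.map (Bialgebra.comulAlgHom k A) = S.map R * S.map L := by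
    refine (left_inv_eq_right_inv (a := C.map (Bialgebra.comulAlgHom k A)) ?_ ?_).symm
    · rw [hmap.1, mul_assoc, ← mul_assoc (S.map L), ← Matrix.map_mul, hC.map_antipode_mul,
        Matrix.map_one _ (map_zero _) (map_one _), one_mul, ← Matrix.map_mul,
        hC.map_antipode_mul, Matrix.map_one _ (map_zero _) (map_one _)]
    · rw [← Matrix.map_mul, hC.mul_map_antipode, Matrix.map_one _ (map_zero _) (map_one _)]
  have counit_S : S.map (Bialgebra.counitAlgHom k A) = C.map (Bialgebra.counitAlgHom k A) := by
    ext i j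
    simp [S]
  refine (isMultiplicative_iff_map _).2 ⟨?_, ?_⟩
  · rw [transpose_map, comul_S, transpose_mul, transpose_map, transpose_map]
  · rw [transpose_map, counit_S, hmap.2, transpose_one]

end Matrix.IsMultiplicative

namespace Module.Basis

variable {k V M N ι : Type*} [CommRing k] [AddCommGroup V] [Module k V] [Fintype ι]
  (b : Module.Basis ι k V)

theorem sum_tmul_injective [AddCommGroup M] [Module k M] :
    Function.Injective fun w : ι → M ↦ ∑ i, b i ⊗ₜ[k] w i := by
  classical
  intro w w' h
  funext j
  simpa [map_sum, TensorProduct.equivFinsuppOfBasisLeft_apply_tmul_apply, Finsupp.single_apply]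
    using congr(TensorProduct.equivFinsuppOfBasisLeft b $h j)

theorem tmul_one_eq_sum [CommRing M] [Algebra k M] (v : V) :
    v ⊗ₜ[k] (1 : M) = ∑ i, b i ⊗ₜ[k] algebraMap k M (b.repr v i) := by
  simp only [Algebra.algebraMap_eq_smul_one, ← TensorProduct.smul_tmul, ← TensorProduct.sum_tmul,
    b.sum_repr]

variable [DecidableEq ι]

section Module

variable [AddCommGroup M] [Module k M] [AddCommGroup N] [Module k N]

noncomputable def coactionMatrix (ρ : V →ₗ[k] V ⊗[k] M) : Matrix ι ι M :=
  Matrix.of fun i j ↦ TensorProduct.equivFinsuppOfBasisLeft b (ρ (b j)) i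

theorem sum_tmul_coactionMatrix (ρ : V →ₗ[k] V ⊗[k] M) (j : ι) :
    ∑ i, b i ⊗ₜ[k] b.coactionMatrix ρ i j = ρ (b j) := by
  conv_rhs => rw [← (TensorProduct.equivFinsuppOfBasisLeft b).symm_apply_apply (ρ (b j))]
  rw [TensorProduct.equivFinsuppOfBasisLeft_symm_apply, Finsupp.sum_fintype _ _ (by simp)]
  rfl

theorem coactionMatrix_eq_of_apply_basis {ρ : V →ₗ[k] V ⊗[k] M} {C : Matrix ι ι M}
    (h : ∀ j, ρ (b j) = ∑ i, b i ⊗ₜ[k] C i j) : b.coactionMatrix ρ = C := by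
  ext i j
  exact congr_fun (b.sum_tmul_injective ((b.sum_tmul_coactionMatrix ρ j).trans (h j))) i

theorem coactionMatrix_constr (C : Matrix ι ι M) :
    b.coactionMatrix (b.constr k fun j ↦ ∑ i, b i ⊗ₜ[k] C i j) = C :=
  b.coactionMatrix_eq_of_apply_basis fun j ↦ b.constr_basis k _ j

theorem coactionMatrix_lTensor_comp (ρ : V →ₗ[k] V ⊗[k] M) (f : M →ₗ[k] N) :
    b.coactionMatrix (LinearMap.lTensor V f ∘ₗ ρ) = (b.coactionMatrix ρ).map f := by
  refine b.coactionMatrix_eq_of_apply_basis fun j ↦ ?_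
  simp [← b.sum_tmul_coactionMatrix ρ j, map_sum]

end Module

section Algebra

variable [CommRing M] [Algebra k M]

theorem apply_eq_sum_tmul_mulVec (ρ : V →ₗ[k] V ⊗[k] M) (v : V) :
    ρ v = ∑ i, b i ⊗ₜ[k] (b.coactionMatrix ρ *ᵥ fun j ↦ algebraMap k M (b.repr v j)) i := by
  conv_lhs => rw [← b.sum_repr v]
  simp only [map_sum, map_smul, ← b.sum_tmul_coactionMatrix ρ, Finset.smul_sum,
    ← TensorProduct.tmul_smul, mulVec, dotProduct, TensorProduct.tmul_sum]
  rw [Finset.sum_comm]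
  simp [Algebra.smul_def, mul_comm]

theorem rTensor_sum_tmul (e : V →ₗ[k] V) (w : ι → M) :
    LinearMap.rTensor M e (∑ j, b j ⊗ₜ[k] w j) =
      ∑ i, b i ⊗ₜ[k] ((LinearMap.toMatrix b b e).map (algebraMap k M) *ᵥ w) i := by
  simp only [map_sum, LinearMap.rTensor_tmul]
  conv_lhs => enter [2, j]; rw [← b.sum_repr (e (b j))]
  simp only [TensorProduct.sum_tmul, TensorProduct.smul_tmul, mulVec, dotProduct,
    TensorProduct.tmul_sum]
  rw [Finset.sum_comm]
  simp [LinearMap.toMatrix_apply, Algebra.smul_def]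

theorem apply_eq_tmul_one_iff (ρ : V →ₗ[k] V ⊗[k] M) (v : V) :
    ρ v = v ⊗ₜ[k] 1 ↔
      (b.coactionMatrix ρ *ᵥ fun j ↦ algebraMap k M (b.repr v j)) =
        fun j ↦ algebraMap k M (b.repr v j) := by
  rw [b.apply_eq_sum_tmul_mulVec ρ v, b.tmul_one_eq_sum v]
  exact b.sum_tmul_injective.eq_iff

theorem comp_eq_rTensor_comp_iff (ρ : V →ₗ[k] V ⊗[k] M) (e : V →ₗ[k] V) :
    ρ ∘ₗ e = LinearMap.rTensor M e ∘ₗ ρ ↔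
      Commute (b.coactionMatrix ρ) ((LinearMap.toMatrix b b e).map (algebraMap k M)) := by
  have on_basis (j : ι) : ρ (e (b j)) = LinearMap.rTensor M e (ρ (b j)) ↔
      ∀ i, (b.coactionMatrix ρ * (LinearMap.toMatrix b b e).map (algebraMap k M)) i j =
        ((LinearMap.toMatrix b b e).map (algebraMap k M) * b.coactionMatrix ρ) i j := by
    rw [b.apply_eq_sum_tmul_mulVec ρ, ← b.sum_tmul_coactionMatrix ρ j, rTensor_sum_tmul,
      b.sum_tmul_injective.eq_iff, funext_iff]
    simp [mul_apply, mulVec, dotProduct, LinearMap.toMatrix_apply]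
  rw [Commute, SemiconjBy, ← Matrix.ext_iff, forall_comm]
  simp_rw [← on_basis]
  exact ⟨fun h j ↦ LinearMap.congr_fun h (b j), fun h ↦ b.ext h⟩

end Algebra

theorem isMultiplicative_coactionMatrix_iff {A : Type*} [CommRing A] [Bialgebra k A]
    (ρ : V →ₗ[k] V ⊗[k] A) :
    (b.coactionMatrix ρ).IsMultiplicative k ↔
      (TensorProduct.assoc k V A A).toLinearMap ∘ₗ LinearMap.rTensor A ρ ∘ₗ ρ =
          LinearMap.lTensor V (Coalgebra.comul (R := k)) ∘ₗ ρ ∧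
        (TensorProduct.rid k V).toLinearMap ∘ₗ
          LinearMap.lTensor V (Coalgebra.counit (R := k)) ∘ₗ ρ = LinearMap.id := by
  set C := b.coactionMatrix ρ
  have coassoc_basis (j : ι) : TensorProduct.assoc k V A A (LinearMap.rTensor A ρ (ρ (b j))) =
      ∑ i, b i ⊗ₜ[k] ∑ p, C i p ⊗ₜ[k] C p j := by
    simp only [← b.sum_tmul_coactionMatrix ρ, map_sum, LinearMap.rTensor_tmul,
      TensorProduct.sum_tmul, TensorProduct.assoc_tmul, TensorProduct.tmul_sum]
    exact Finset.sum_comm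
  have comul_basis (j : ι) : LinearMap.lTensor V (Coalgebra.comul (R := k)) (ρ (b j)) =
      ∑ i, b i ⊗ₜ[k] Coalgebra.comul (R := k) (C i j) := by
    simp [← b.sum_tmul_coactionMatrix ρ, map_sum, C]
  have counit_basis (j : ι) : LinearMap.lTensor V (Coalgebra.counit (R := k)) (ρ (b j)) =
      ∑ i, b i ⊗ₜ[k] Coalgebra.counit (R := k) (C i j) := by
    simp [← b.sum_tmul_coactionMatrix ρ, map_sum, C]
  have basis_tmul_one (j : ι) : b j ⊗ₜ[k] (1 : k) = ∑ i, b i ⊗ₜ[k] (1 : Matrix ι ι k) i j := by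
    simp [b.tmul_one_eq_sum, one_apply, Finsupp.single_apply, eq_comm]
  constructor
  · rintro ⟨hcomul, hcounit⟩
    refine ⟨b.ext fun j ↦ ?_, b.ext fun j ↦ ?_⟩
    · simp [coassoc_basis, comul_basis, hcomul]
    · simp [counit_basis, hcounit, ← basis_tmul_one]
  · rintro ⟨hcoassoc, hcounit⟩
    refine ⟨fun i j ↦ ?_, fun i j ↦ ?_⟩
    · have := LinearMap.congr_fun hcoassoc (b j)
      simp only [LinearMap.comp_apply, LinearEquiv.coe_coe, coassoc_basis, comul_basis] at this
      exact (congr_fun (b.sum_tmul_injective this) i).symm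
    · have := LinearMap.congr_fun hcounit (b j)
      simp only [LinearMap.comp_apply, LinearEquiv.coe_coe, LinearMap.id_apply,
        ← LinearEquiv.eq_symm_apply, TensorProduct.rid_symm_apply, counit_basis,
        basis_tmul_one] at this
      exact congr_fun (b.sum_tmul_injective this) i

end Module.Basis

section Projection

open LinearMap Submodule

variable {k V M : Type*} [CommRing k] [AddCommGroup V] [Module k V] [AddCommGroup M] [Module k M]
  (ρ : V →ₗ[k] V ⊗[k] M) {V₁ V₂ : Submodule k V} (hc : IsCompl V₁ V₂)

theorem mem_range_rTensor_subtype_of_comp_projection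
    (h : ρ ∘ₗ V₁.projection V₂ hc = rTensor M (V₁.projection V₂ hc) ∘ₗ ρ) {v : V}
    (hv : v ∈ V₁) : ρ v ∈ range (rTensor M V₁.subtype) := by
  refine ⟨rTensor M (V₁.projectionOnto V₂ hc) (ρ v), ?_⟩
  rw [← LinearMap.comp_apply, ← rTensor_comp]
  calc rTensor M (V₁.projection V₂ hc) (ρ v) = ρ (V₁.projection V₂ hc v) :=
        (LinearMap.congr_fun h v).symm
    _ = ρ v := by rw [projection_apply_of_mem_left hc hv]

theorem comp_projection_eq_rTensor_comp_symm
    (h : ρ ∘ₗ V₁.projection V₂ hc = rTensor M (V₁.projection V₂ hc) ∘ₗ ρ) :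
    ρ ∘ₗ V₂.projection V₁ hc.symm = rTensor M (V₂.projection V₁ hc.symm) ∘ₗ ρ := by
  rw [projection_eq_id_sub_projection, comp_sub, rTensor_sub, rTensor_id, sub_comp, h]
  rfl

theorem comp_projection_eq_rTensor_comp_iff :
    ρ ∘ₗ V₁.projection V₂ hc = rTensor M (V₁.projection V₂ hc) ∘ₗ ρ ↔
      (∀ v ∈ V₁, ρ v ∈ range (rTensor M V₁.subtype)) ∧
        ∀ v ∈ V₂, ρ v ∈ range (rTensor M V₂.subtype) := by
  refine ⟨fun h ↦ ⟨fun v ↦ mem_range_rTensor_subtype_of_comp_projection ρ hc h,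
    fun v ↦ mem_range_rTensor_subtype_of_comp_projection ρ hc.symm
      (comp_projection_eq_rTensor_comp_symm ρ hc h)⟩,
    fun ⟨h₁, h₂⟩ ↦ LinearMap.ext fun v ↦ ?_⟩
  obtain ⟨y₁, hy₁⟩ := h₁ _ (projection_apply_mem hc v)
  obtain ⟨y₂, hy₂⟩ := h₂ _ (projection_apply_mem hc.symm v)
  have projection_comp_subtype_left : V₁.projection V₂ hc ∘ₗ V₁.subtype = V₁.subtype :=
    LinearMap.ext (projection_apply_left hc)
  have projection_comp_subtype_right : V₁.projection V₂ hc ∘ₗ V₂.subtype = 0 :=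
    LinearMap.ext (projection_apply_right hc)
  conv_rhs => rw [LinearMap.comp_apply, ← projection_add_projection_eq_self hc v, map_add, ← hy₁,
    ← hy₂]
  rw [map_add, ← LinearMap.comp_apply (rTensor M _), ← LinearMap.comp_apply (rTensor M _),
    ← rTensor_comp, ← rTensor_comp, projection_comp_subtype_left, projection_comp_subtype_right,
    rTensor_zero, LinearMap.zero_apply, add_zero, hy₁]
  rfl

end Projection

namespace RationalRep

variable {k A ι V : Type} [Field k] [CommRing A] [HopfAlgebra k A] [Fintype ι] [DecidableEq ι]
  [AddCommGroup V] [Module k V] (b : Module.Basis ι k V)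

theorem isMultiplicative_coactionMatrix (r : RationalRep k A V) :
    (b.coactionMatrix r.ρ).IsMultiplicative k :=
  (b.isMultiplicative_coactionMatrix_iff r.ρ).2 ⟨r.coassoc, r.counit⟩

noncomputable def ofMatrix (C : Matrix ι ι A) (hC : C.IsMultiplicative k) :
    RationalRep k A V where
  ρ := b.constr k fun j ↦ ∑ i, b i ⊗ₜ[k] C i j
  coassoc := ((b.isMultiplicative_coactionMatrix_iff _).1 (by rwa [b.coactionMatrix_constr])).1
  counit := ((b.isMultiplicative_coactionMatrix_iff _).1 (by rwa [b.coactionMatrix_constr])).2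

theorem coactionMatrix_ofMatrix (C : Matrix ι ι A) (hC : C.IsMultiplicative k) :
    b.coactionMatrix (ofMatrix b C hC).ρ = C :=
  b.coactionMatrix_constr C

variable (r : RationalRep k A V)

/-- The conjugation representation on `End V`, an endomorphism with matrix `E` in the basis `b`
being encoded as `Matrix.vec E`. -/
noncomputable def endRep : RationalRep k A (ι × ι → k) :=
  ofMatrix (Pi.basisFun k (ι × ι)) _
    ((r.isMultiplicative_coactionMatrix b).transpose_map_antipode.kronecker
      (r.isMultiplicative_coactionMatrix b))

theorem lTensor_endRep_vec_eq_tmul_one_iff {M : Type} [CommRing M] [Algebra k M]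
    (f : A →ₐ[k] M) (E : Matrix ι ι k) :
    LinearMap.lTensor _ f.toLinearMap ((r.endRep b).ρ E.vec) = E.vec ⊗ₜ[k] 1 ↔
      Commute ((b.coactionMatrix r.ρ).map f) (E.map (algebraMap k M)) := by
  have hC := r.isMultiplicative_coactionMatrix b
  let u : (Matrix ι ι M)ˣ :=
    ⟨(b.coactionMatrix r.ρ).map f, ((b.coactionMatrix r.ρ).map (HopfAlgebra.antipode k)).map f,
      by rw [← Matrix.map_mul, hC.mul_map_antipode, Matrix.map_one _ (map_zero _) (map_one _)],
      by rw [← Matrix.map_mul, hC.map_antipode_mul, Matrix.map_one _ (map_zero _) (map_one _)]⟩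
  have hvec : (fun j ↦ algebraMap k M (E.vec j)) = (E.map (algebraMap k M)).vec := rfl
  rw [← LinearMap.comp_apply, (Pi.basisFun k (ι × ι)).apply_eq_tmul_one_iff,
    Module.Basis.coactionMatrix_lTensor_comp, endRep, coactionMatrix_ofMatrix]
  simp only [Pi.basisFun_repr, hvec, AlgHom.coe_toLinearMap, map_kronecker, kronecker_mulVec_vec,
    vec_inj, transpose_map, transpose_transpose]
  exact Units.mul_inv_eq_iff_eq_mul (b := u)

theorem vec_mem_fixedPoints_endRep_iff (E : Matrix ι ι k) :
    E.vec ∈ (r.endRep b).fixedPoints ↔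
      Commute (b.coactionMatrix r.ρ) (E.map (algebraMap k A)) := by
  simpa [fixedPoints] using r.lTensor_endRep_vec_eq_tmul_one_iff b (AlgHom.id k A) E

theorem vec_mem_fixedPointsUnder_endRep_iff {B : Type} [CommRing B] [HopfAlgebra k B]
    (π : A →ₐc[k] B) (E : Matrix ι ι k) :
    E.vec ∈ (r.endRep b).fixedPointsUnder π ↔
      Commute ((b.coactionMatrix r.ρ).map π) (E.map (algebraMap k B)) :=
  r.lTensor_endRep_vec_eq_tmul_one_iff b (π : A →ₐ[k] B) E

theorem comp_eq_rTensor_comp_of_fixedPointsUnder_endRep_subset {B : Type} [CommRing B]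
    [HopfAlgebra k B] (π : A →ₐc[k] B)
    (hfix : (r.endRep b).fixedPointsUnder π ⊆ (r.endRep b).fixedPoints) (e : V →ₗ[k] V)
    (he : (LinearMap.lTensor V (π : A →ₗ[k] B) ∘ₗ r.ρ) ∘ₗ e =
      LinearMap.rTensor B e ∘ₗ LinearMap.lTensor V (π : A →ₗ[k] B) ∘ₗ r.ρ) :
    r.ρ ∘ₗ e = LinearMap.rTensor A e ∘ₗ r.ρ := by
  have commute_B := (b.comp_eq_rTensor_comp_iff _ e).1 he
  rw [b.coactionMatrix_lTensor_comp] at commute_B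
  rw [b.comp_eq_rTensor_comp_iff, ← vec_mem_fixedPoints_endRep_iff]
  exact hfix ((r.vec_mem_fixedPointsUnder_endRep_iff b π _).2 commute_B)

end RationalRep

theorem decompositions_descend_of_fixedPoints_eq_general
    (k A B : Type) [Field k] [CommRing A] [HopfAlgebra k A] [CommRing B]
    [HopfAlgebra k B] (π : A →ₐc[k] B)
    (hfix : ∀ (V : Type) (_ : AddCommGroup V) (_ : Module k V)
      (_ : FiniteDimensional k V) (r : RationalRep k A V),
      r.fixedPointsUnder π = r.fixedPoints) :
    ∀ (V : Type) (_ : AddCommGroup V) (_ : Module k V) (_ : FiniteDimensional k V)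
      (r : RationalRep k A V) (V₁ V₂ : Submodule k V), IsCompl V₁ V₂ →
      r.IsSubrepUnder π V₁ → r.IsSubrepUnder π V₂ →
      r.IsSubrep V₁ ∧ r.IsSubrep V₂ := by
  intro V _ _ _ r V₁ V₂ hc h₁ h₂
  let b := Module.finBasis k V
  have commute_H := (comp_projection_eq_rTensor_comp_iff
    (LinearMap.lTensor V (π : A →ₗ[k] B) ∘ₗ r.ρ) hc).2 ⟨h₁, h₂⟩
  exact (comp_projection_eq_rTensor_comp_iff r.ρ hc).1
    (r.comp_eq_rTensor_comp_of_fixedPointsUnder_endRep_subset b π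
      (hfix _ _ _ inferInstance (r.endRep b)).le _ commute_H)

/-- If `V^H = V^G` for every finite-dimensional `G`-module `V`, then every direct sum
decomposition of a finite-dimensional `G`-module into `H`-submodules is a decomposition
into `G`-submodules. -/
theorem decompositions_descend_of_fixedPoints_eq
    (k A B : Type) [Field k] [CommRing A] [HopfAlgebra k A] [CommRing B]
    [HopfAlgebra k B] (hA : Algebra.FiniteType k A) (hB : Algebra.FiniteType k B)
    (π : A →ₐc[k] B) (hπ : Function.Surjective π)
    (hfix : ∀ (V : Type) (_ : AddCommGroup V) (_ : Module k V)
      (_ : FiniteDimensional k V) (r : RationalRep k A V),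
      r.fixedPointsUnder π = r.fixedPoints) :
    ∀ (V : Type) (_ : AddCommGroup V) (_ : Module k V) (_ : FiniteDimensional k V)
      (r : RationalRep k A V) (V₁ V₂ : Submodule k V), IsCompl V₁ V₂ →
      r.IsSubrepUnder π V₁ → r.IsSubrepUnder π V₂ →
      r.IsSubrep V₁ ∧ r.IsSubrep V₂ :=
  decompositions_descend_of_fixedPoints_eq_general k A B π hfix
end

section
/- Let G be an affine algebraic group over a field k and H an algebraic subgroup such that for every finite-dimensional G-module V, any direct sum decomposition of V into H-submodules is a decomposition into G-submodules. Then H is affine epimorphic in G: any two morphisms from G to an affine algebraic group agreeing on H are equal. -/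
open TensorProduct

/-!
Write `O(G')` as the union of its finite-dimensional subcomodules and choose one, `U`, containing
a set of algebra generators. Two Hopf algebra maps `φ₁ φ₂ : O(G') → O(G)` turn `U` into two
`G`-modules `U₁`, `U₂`. If `π ∘ φ₁ = π ∘ φ₂`, the diagonal of `U₁ ⊕ U₂` is an `H`-submodule, and
it is complementary to the `G`-submodule `U₁ ⊕ 0`. By hypothesis the diagonal is then a
`G`-submodule, which forces the coactions of `U₁` and `U₂` to coincide; applying the counit of
`O(G')` to them recovers `φ₁ = φ₂` on `U`, hence on the generators.
-/

section

open LinearMap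

variable {R M N P Q : Type*} [CommSemiring R] [AddCommMonoid M] [Module R M]
  [AddCommMonoid N] [Module R N] [AddCommMonoid P] [Module R P] [AddCommMonoid Q] [Module R Q]

theorem LinearMap.lTensor_rTensor_comm (f : M →ₗ[R] N) (g : P →ₗ[R] Q) (x : M ⊗[R] P) :
    g.lTensor N (f.rTensor P x) = f.rTensor Q (g.lTensor M x) := by
  rw [← comp_apply, lTensor_comp_rTensor, ← rTensor_comp_lTensor, comp_apply]

namespace TensorProduct

theorem rid_comp_lTensor_comp_rTensor (g : M →ₗ[R] N) (f : P →ₗ[R] R) :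
    (TensorProduct.rid R N).toLinearMap ∘ₗ f.lTensor N ∘ₗ g.rTensor P
      = g ∘ₗ (TensorProduct.rid R M).toLinearMap ∘ₗ f.lTensor M :=
  ext' fun _ _ => by simp

theorem rid_comp_lTensor_tensor (f : P →ₗ[R] R) :
    (TensorProduct.rid R (M ⊗[R] N)).toLinearMap ∘ₗ f.lTensor (M ⊗[R] N)
      = ((TensorProduct.rid R N).toLinearMap ∘ₗ f.lTensor N).lTensor M
          ∘ₗ (TensorProduct.assoc R M N P).toLinearMap :=
  ext_threefold fun _ _ _ => by simp

theorem rTensor_mem_range_rTensor_range_subtype (f : M →ₗ[R] N) (x : M ⊗[R] P) :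
    f.rTensor P x ∈ range ((range f).subtype.rTensor P) :=
  ⟨f.rangeRestrict.rTensor P x, by rw [← rTensor_comp_apply]; rfl⟩

theorem lTensor_mem_range_rTensor_subtype {W : Submodule R M} {x : M ⊗[R] N}
    (hx : x ∈ range (W.subtype.rTensor N)) (g : N →ₗ[R] P) :
    g.lTensor M x ∈ range (W.subtype.rTensor P) := by
  obtain ⟨y, rfl⟩ := hx
  exact ⟨g.lTensor W y, (lTensor_rTensor_comm _ _ _).symm⟩

theorem rid_lTensor_mem_of_mem_range_rTensor_subtype {W : Submodule R M} {x : M ⊗[R] N}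
    (hx : x ∈ range (W.subtype.rTensor N)) (f : N →ₗ[R] R) :
    TensorProduct.rid R M (f.lTensor M x) ∈ W := by
  obtain ⟨y, rfl⟩ := hx
  have hy := congr($(rid_comp_lTensor_comp_rTensor W.subtype f) y)
  simp only [comp_apply, LinearEquiv.coe_coe] at hy
  exact hy ▸ Submodule.coe_mem _

theorem mem_range_rTensor_subtype_of_basis {ι : Type*} [DecidableEq ι] (e : Module.Basis ι R N)
    {W : Submodule R M} {x : M ⊗[R] N} (h : ∀ i, equivFinsuppOfBasisRight e x i ∈ W) :
    x ∈ range (W.subtype.rTensor N) := by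
  rw [← (equivFinsuppOfBasisRight e).symm_apply_apply x, equivFinsuppOfBasisRight_symm_apply]
  exact Submodule.finsuppSum_mem _ _ _ _ fun i _ => ⟨⟨_, h i⟩ ⊗ₜ e i, rfl⟩

end TensorProduct

variable {ρM : M →ₗ[R] M ⊗[R] P} {ρN : N →ₗ[R] N ⊗[R] P} {j : N →ₗ[R] M}

theorem assoc_comp_rTensor_comp_of_intertwining (h : j.rTensor P ∘ₗ ρN = ρM ∘ₗ j) :
    (TensorProduct.assoc R M P P).toLinearMap ∘ₗ ρM.rTensor P ∘ₗ ρM ∘ₗ j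
      = j.rTensor (P ⊗[R] P) ∘ₗ (TensorProduct.assoc R N P P).toLinearMap
          ∘ₗ ρN.rTensor P ∘ₗ ρN := by
  ext w
  simp only [comp_apply, LinearEquiv.coe_coe, ← rTensor_comp_apply, ← h]
  simp [rTensor_comp_apply, rTensor_tensor]

theorem lTensor_comp_of_intertwining (h : j.rTensor P ∘ₗ ρN = ρM ∘ₗ j) (g : P →ₗ[R] Q) :
    g.lTensor M ∘ₗ ρM ∘ₗ j = j.rTensor Q ∘ₗ g.lTensor N ∘ₗ ρN := by
  rw [← h, ← comp_assoc, ← comp_assoc, lTensor_comp_rTensor, rTensor_comp_lTensor]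

theorem rid_comp_lTensor_comp_of_intertwining (h : j.rTensor P ∘ₗ ρN = ρM ∘ₗ j)
    (f : P →ₗ[R] R) :
    (TensorProduct.rid R M).toLinearMap ∘ₗ f.lTensor M ∘ₗ ρM ∘ₗ j
      = j ∘ₗ (TensorProduct.rid R N).toLinearMap ∘ₗ f.lTensor N ∘ₗ ρN := by
  ext w
  have hw : ρM (j w) = j.rTensor P (ρN w) := congr($h w).symm
  simpa only [comp_apply, LinearEquiv.coe_coe, hw] using
    congr($(TensorProduct.rid_comp_lTensor_comp_rTensor j f) (ρN w))

end

section Diagonal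

variable (R V : Type*)

def Submodule.diagonal [Semiring R] [AddCommMonoid V] [Module R V] : Submodule R (V × V) :=
  LinearMap.range (LinearMap.id.prod LinearMap.id)

theorem Submodule.isCompl_diagonal_range_inl [Ring R] [AddCommGroup V] [Module R V] :
    IsCompl (diagonal R V) (LinearMap.range (LinearMap.inl R V V)) := by
  constructor
  · rw [Submodule.disjoint_def]
    rintro _ ⟨v, rfl⟩ ⟨w, hw⟩
    have hv : v = 0 := (congrArg Prod.snd hw).symm
    simp [hv]
  · rw [codisjoint_iff, eq_top_iff]
    rintro ⟨x, y⟩ -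
    exact Submodule.mem_sup.2 ⟨(y, y), ⟨y, rfl⟩, (x - y, 0), ⟨x - y, rfl⟩, by simp⟩

variable {R V}

theorem rTensor_fst_eq_rTensor_snd_of_mem_range_diagonal {P : Type*} [CommSemiring R]
    [AddCommMonoid V] [Module R V] [AddCommMonoid P] [Module R P] {x : (V × V) ⊗[R] P}
    (hx : x ∈ LinearMap.range ((Submodule.diagonal R V).subtype.rTensor P)) :
    (LinearMap.fst R V V).rTensor P x = (LinearMap.snd R V V).rTensor P x := by
  obtain ⟨y, rfl⟩ := hx
  rw [← LinearMap.rTensor_comp_apply, ← LinearMap.rTensor_comp_apply]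
  congr 2
  ext ⟨_, v, rfl⟩
  rfl

end Diagonal

noncomputable def regularRep (k A : Type) [Field k] [CommRing A] [HopfAlgebra k A] :
    RationalRep k A A where
  ρ := Coalgebra.comul
  coassoc := Coalgebra.coassoc
  counit := by
    rw [Coalgebra.lTensor_counit_comp_comul]
    ext
    simp

@[simp]
theorem regularRep_ρ (k A : Type) [Field k] [CommRing A] [HopfAlgebra k A] :
    (regularRep k A).ρ = Coalgebra.comul :=
  rfl

namespace RationalRep

variable {k A B V W : Type} [Field k] [CommRing A] [HopfAlgebra k A] [CommRing B]
  [HopfAlgebra k B] [AddCommGroup V] [Module k V] [AddCommGroup W] [Module k W]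

noncomputable def ofInjective (r : RationalRep k A V) {j : W →ₗ[k] V}
    (hj : Function.Injective j) (ρ : W →ₗ[k] W ⊗[k] A) (h : j.rTensor A ∘ₗ ρ = r.ρ ∘ₗ j) :
    RationalRep k A W where
  ρ := ρ
  coassoc := by
    refine LinearMap.ext fun w => Module.Flat.rTensor_preserves_injective_linearMap j hj ?_
    have h₁ := congr($(assoc_comp_rTensor_comp_of_intertwining h) w)
    have h₂ := congr($(lTensor_comp_of_intertwining h Coalgebra.comul) w)
    have h₃ := congr($r.coassoc (j w))
    simp only [LinearMap.comp_apply, LinearEquiv.coe_coe] at h₁ h₂ h₃ ⊢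
    rw [← h₁, ← h₂, h₃]
  counit := by
    refine LinearMap.ext fun w => hj ?_
    have h₁ := congr($(rid_comp_lTensor_comp_of_intertwining h Coalgebra.counit) w)
    have h₂ := congr($r.counit (j w))
    simp only [LinearMap.comp_apply, LinearEquiv.coe_coe, LinearMap.id_apply] at h₁ h₂ ⊢
    rw [← h₁, h₂]

noncomputable def restrict (r : RationalRep k A V) (U : Submodule k V) (hU : r.IsSubrep U) :
    RationalRep k A U :=
  have hinj := Module.Flat.rTensor_preserves_injective_linearMap (M := A) U.subtype
    U.injective_subtype
  r.ofInjective U.injective_subtype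
    ((LinearEquiv.ofInjective _ hinj).symm.toLinearMap ∘ₗ
      (r.ρ ∘ₗ U.subtype).codRestrict _ fun u => hU u u.2)
    (LinearMap.ext fun _ => LinearEquiv.ofInjective_symm_apply (h := hinj) _ _)

theorem rTensor_subtype_restrict_ρ (r : RationalRep k A V) (U : Submodule k V)
    (hU : r.IsSubrep U) (u : U) : U.subtype.rTensor A ((r.restrict U hU).ρ u) = r.ρ u :=
  LinearEquiv.ofInjective_symm_apply
    (h := Module.Flat.rTensor_preserves_injective_linearMap _ U.injective_subtype) _ _

noncomputable def prod (r₁ : RationalRep k A V) (r₂ : RationalRep k A W) :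
    RationalRep k A (V × W) where
  ρ := LinearMap.coprod ((LinearMap.inl k V W).rTensor A ∘ₗ r₁.ρ)
    ((LinearMap.inr k V W).rTensor A ∘ₗ r₂.ρ)
  coassoc := by
    apply LinearMap.prod_ext
    · simpa only [coassoc_simps, LinearMap.coprod_inl]
        using congr((LinearMap.inl k V W).rTensor (A ⊗[k] A) ∘ₗ $r₁.coassoc)
    · simpa only [coassoc_simps, LinearMap.coprod_inr]
        using congr((LinearMap.inr k V W).rTensor (A ⊗[k] A) ∘ₗ $r₂.coassoc)
  counit := by
    apply LinearMap.prod_ext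
    · simpa only [coassoc_simps, LinearMap.coprod_inl]
        using congr(LinearMap.inl k V W ∘ₗ $r₁.counit)
    · simpa only [coassoc_simps, LinearMap.coprod_inr]
        using congr(LinearMap.inr k V W ∘ₗ $r₂.counit)

noncomputable def map {A' : Type} [CommRing A'] [HopfAlgebra k A'] (r : RationalRep k A' V)
    (φ : A' →ₗc[k] A) : RationalRep k A V where
  ρ := (φ : A' →ₗ[k] A).lTensor V ∘ₗ r.ρ
  coassoc := by
    have h := congr((TensorProduct.map (φ : A' →ₗ[k] A) (φ : A' →ₗ[k] A)).lTensor V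
      ∘ₗ $r.coassoc)
    simp only [coassoc_simps] at h ⊢
    rw [h, CoalgHomClass.map_comp_comul]
  counit := by
    rw [← r.counit]
    simp only [coassoc_simps, CoalgHomClass.counit_comp]

theorem ρ_rid_lTensor (r : RationalRep k A V) (f : Module.Dual k A) (v : V) :
    r.ρ (TensorProduct.rid k V (f.lTensor V (r.ρ v)))
      = ((TensorProduct.rid k A).toLinearMap ∘ₗ f.lTensor A ∘ₗ Coalgebra.comul).lTensor V
          (r.ρ v) := by
  calc r.ρ (TensorProduct.rid k V (f.lTensor V (r.ρ v)))
      = TensorProduct.rid k (V ⊗[k] A) (f.lTensor (V ⊗[k] A) (r.ρ.rTensor A (r.ρ v))) :=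
        congr($(TensorProduct.rid_comp_lTensor_comp_rTensor r.ρ f) (r.ρ v)).symm
    _ = ((TensorProduct.rid k A).toLinearMap ∘ₗ f.lTensor A).lTensor V
          (TensorProduct.assoc k V A A (r.ρ.rTensor A (r.ρ v))) :=
        congr($(TensorProduct.rid_comp_lTensor_tensor f) (r.ρ.rTensor A (r.ρ v)))
    _ = ((TensorProduct.rid k A).toLinearMap ∘ₗ f.lTensor A).lTensor V
          (Coalgebra.comul.lTensor V (r.ρ v)) := by
        have hv := congr($r.coassoc v)
        simp only [LinearMap.comp_apply, LinearEquiv.coe_coe] at hv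
        rw [hv]
    _ = _ := by rw [← LinearMap.lTensor_comp_apply, LinearMap.comp_assoc]

theorem exists_finiteDimensional_isSubrep (r : RationalRep k A V) {s : Set V} (hs : s.Finite) :
    ∃ U : Submodule k V, FiniteDimensional k U ∧ s ⊆ U ∧ r.IsSubrep U := by
  classical
  let e := Module.Basis.ofVectorSpace k A
  let c v := TensorProduct.equivFinsuppOfBasisRight e (r.ρ v)
  let U := Submodule.span k (⋃ v ∈ s, Set.range (c v))
  have hρ : ∀ v ∈ s, r.ρ v ∈ LinearMap.range (U.subtype.rTensor A) := fun v hv =>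
    TensorProduct.mem_range_rTensor_subtype_of_basis e fun i =>
      Submodule.subset_span (Set.mem_biUnion hv ⟨i, rfl⟩)
  refine ⟨U, FiniteDimensional.span_of_finite k (hs.biUnion fun v _ => (c v).finite_range),
    fun v hv => ?_, fun u hu => ?_⟩
  · have hcounit : TensorProduct.rid k V (Coalgebra.counit.lTensor V (r.ρ v)) = v :=
      congr($r.counit v)
    exact hcounit ▸ TensorProduct.rid_lTensor_mem_of_mem_range_rTensor_subtype (hρ v hv) _
  · refine (Submodule.span_le (p := (LinearMap.range (U.subtype.rTensor A)).comap r.ρ)).2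
      ?_ hu
    simp only [Set.iUnion_subset_iff, Set.range_subset_iff]
    intro v hv i
    -- `c v i` is the contraction of `ρ v` against the `i`-th coordinate functional of `A`
    rw [SetLike.mem_coe, Submodule.mem_comap, TensorProduct.equivFinsuppOfBasisRight_apply,
      r.ρ_rid_lTensor]
    exact TensorProduct.lTensor_mem_range_rTensor_subtype (hρ v hv) _

theorem IsSubrep.isSubrepUnder {r : RationalRep k A V} {U : Submodule k V} (hU : r.IsSubrep U)
    (π : A →ₐc[k] B) : r.IsSubrepUnder π U :=
  fun v hv => TensorProduct.lTensor_mem_range_rTensor_subtype (hU v hv) _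

theorem isSubrep_range_inl_prod (r₁ : RationalRep k A V) (r₂ : RationalRep k A W) :
    (r₁.prod r₂).IsSubrep (LinearMap.range (LinearMap.inl k V W)) := by
  rintro _ ⟨v, rfl⟩
  simpa [prod] using TensorProduct.rTensor_mem_range_rTensor_range_subtype _ (r₁.ρ v)

theorem isSubrepUnder_diagonal_prod {r₁ r₂ : RationalRep k A V} (π : A →ₐc[k] B)
    (h : (π : A →ₗ[k] B).lTensor V ∘ₗ r₁.ρ = (π : A →ₗ[k] B).lTensor V ∘ₗ r₂.ρ) :
    (r₁.prod r₂).IsSubrepUnder π (Submodule.diagonal k V) := by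
  rintro _ ⟨v, rfl⟩
  have hv : (π : A →ₗ[k] B).lTensor V (r₁.ρ v) = (π : A →ₗ[k] B).lTensor V (r₂.ρ v) :=
    congr($h v)
  have hsum : LinearMap.inl k V V + LinearMap.inr k V V = LinearMap.id.prod LinearMap.id := by
    ext <;> simp
  have hx : (π : A →ₗ[k] B).lTensor (V × V) ((r₁.prod r₂).ρ (v, v))
      = (LinearMap.id.prod LinearMap.id).rTensor B ((π : A →ₗ[k] B).lTensor V (r₂.ρ v)) := by
    rw [← hsum, LinearMap.rTensor_add]
    simp [prod, LinearMap.lTensor_rTensor_comm, hv]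
  exact hx ▸ TensorProduct.rTensor_mem_range_rTensor_range_subtype _ _

theorem ρ_eq_of_isSubrep_diagonal_prod {r₁ r₂ : RationalRep k A V}
    (h : (r₁.prod r₂).IsSubrep (Submodule.diagonal k V)) : r₁.ρ = r₂.ρ := by
  ext v
  simpa [prod, ← LinearMap.rTensor_comp_apply] using
    rTensor_fst_eq_rTensor_snd_of_mem_range_diagonal (h (v, v) ⟨v, rfl⟩)

end RationalRep

theorem eqOn_of_lTensor_comp_restrict_regularRep_ρ_eq {k A A' : Type} [Field k] [CommRing A]
    [HopfAlgebra k A] [CommRing A'] [HopfAlgebra k A'] {U : Submodule k A'}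
    (hU : (regularRep k A').IsSubrep U) {ψ₁ ψ₂ : A' →ₗ[k] A}
    (h : ψ₁.lTensor U ∘ₗ ((regularRep k A').restrict U hU).ρ
      = ψ₂.lTensor U ∘ₗ ((regularRep k A').restrict U hU).ρ) :
    Set.EqOn ψ₁ ψ₂ U := by
  -- the counit axiom `(ε ⊗ id) ∘ Δ = id`, carried through `ψ`
  have recover (ψ : A' →ₗ[k] A) (u : U) : TensorProduct.lid k A
      ((Coalgebra.counit ∘ₗ U.subtype).rTensor A
        (ψ.lTensor U (((regularRep k A').restrict U hU).ρ u))) = ψ u := by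
    rw [← LinearMap.lTensor_rTensor_comm, LinearMap.rTensor_comp_apply,
      RationalRep.rTensor_subtype_restrict_ρ]
    simp [Coalgebra.rTensor_counit_comul]
  intro u hu
  rw [← recover ψ₁ ⟨u, hu⟩, ← recover ψ₂ ⟨u, hu⟩]
  exact congr(TensorProduct.lid k A (LinearMap.rTensor A _ $(congr($h ⟨u, hu⟩))))

theorem affineEpimorphic_of_decompositions_descend_general
    (k A B : Type) [Field k] [CommRing A] [HopfAlgebra k A] [CommRing B]
    [HopfAlgebra k B]
    (π : A →ₐc[k] B)
    (hdec : ∀ (V : Type) (_ : AddCommGroup V) (_ : Module k V)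
      (_ : FiniteDimensional k V) (r : RationalRep k A V) (V₁ V₂ : Submodule k V),
      IsCompl V₁ V₂ → r.IsSubrepUnder π V₁ → r.IsSubrepUnder π V₂ →
      r.IsSubrep V₁ ∧ r.IsSubrep V₂) :
    IsAffineEpimorphic k A B π := by
  intro A' _ _ hA' φ₁ φ₂ hφ
  obtain ⟨s, hs⟩ := hA'.out
  obtain ⟨U, _, hsU, hU⟩ := (regularRep k A').exists_finiteDimensional_isSubrep s.finite_toSet
  let r := (regularRep k A').restrict U hU
  have hH : (π : A →ₗ[k] B).lTensor U ∘ₗ (r.map φ₁).ρ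
      = (π : A →ₗ[k] B).lTensor U ∘ₗ (r.map φ₂).ρ := by
    have hπφ : (π : A →ₗ[k] B) ∘ₗ ((φ₁ : A' →ₗc[k] A) : A' →ₗ[k] A)
        = (π : A →ₗ[k] B) ∘ₗ ((φ₂ : A' →ₗc[k] A) : A' →ₗ[k] A) :=
      congr(($hφ : A' →ₗ[k] B))
    simp only [RationalRep.map, ← LinearMap.comp_assoc, ← LinearMap.lTensor_comp, hπφ]
  have hdiag := RationalRep.isSubrepUnder_diagonal_prod π hH
  have hinl := (RationalRep.isSubrep_range_inl_prod (r.map φ₁) (r.map φ₂)).isSubrepUnder π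
  obtain ⟨hG, -⟩ := hdec (U × U) inferInstance inferInstance inferInstance _ _ _
    (Submodule.isCompl_diagonal_range_inl k U) hdiag hinl
  have hgen : Set.EqOn φ₁ φ₂ s := (eqOn_of_lTensor_comp_restrict_regularRep_ρ_eq hU
    (RationalRep.ρ_eq_of_isSubrep_diagonal_prod hG)).mono hsU
  exact BialgHom.coe_toAlgHom_injective (AlgHom.ext_of_adjoin_eq_top hs hgen)

/-- If every direct sum decomposition of a finite-dimensional `G`-module into
`H`-submodules is a decomposition into `G`-submodules, then `H` is affine epimorphic
in `G`. -/
theorem affineEpimorphic_of_decompositions_descend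
    (k A B : Type) [Field k] [CommRing A] [HopfAlgebra k A] [CommRing B]
    [HopfAlgebra k B] (hA : Algebra.FiniteType k A) (hB : Algebra.FiniteType k B)
    (π : A →ₐc[k] B) (hπ : Function.Surjective π)
    (hdec : ∀ (V : Type) (_ : AddCommGroup V) (_ : Module k V)
      (_ : FiniteDimensional k V) (r : RationalRep k A V) (V₁ V₂ : Submodule k V),
      IsCompl V₁ V₂ → r.IsSubrepUnder π V₁ → r.IsSubrepUnder π V₂ →
      r.IsSubrep V₁ ∧ r.IsSubrep V₂) :
    IsAffineEpimorphic k A B π :=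
  affineEpimorphic_of_decompositions_descend_general k A B π hdec
end

section
/- For an affine algebraic subgroup N and an algebraic subgroup H with N normalized by H, the largest anti-affine subgroup of the semidirect product N ⋊ H equals H_ant (embedded via H). In particular (N·H)_ant = H_ant inside G. -/
open AlgebraicGeometry CategoryTheory

universe u

/-- `Spec k` as a scheme. -/
noncomputable abbrev SpecK (k : Type) [Field k] : Scheme := Spec (CommRingCat.of k)

/-- An algebraic group over `k`: a scheme of finite type over `k` together with a
natural group structure on its functor of points on `k`-schemes. -/
structure GroupScheme (k : Type) [Field k] : Type 1 where
  X : Over (SpecK k)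
  locallyOfFiniteType : LocallyOfFiniteType X.hom
  quasiCompact : QuasiCompact X.hom
  mul : ∀ (T : Over (SpecK k)), (T ⟶ X) → (T ⟶ X) → (T ⟶ X)
  one : ∀ (T : Over (SpecK k)), (T ⟶ X)
  inv : ∀ (T : Over (SpecK k)), (T ⟶ X) → (T ⟶ X)
  mul_assoc : ∀ (T : Over (SpecK k)) (a b c : T ⟶ X),
    mul T (mul T a b) c = mul T a (mul T b c)
  one_mul : ∀ (T : Over (SpecK k)) (a : T ⟶ X), mul T (one T) a = a
  mul_one : ∀ (T : Over (SpecK k)) (a : T ⟶ X), mul T a (one T) = a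
  inv_mul : ∀ (T : Over (SpecK k)) (a : T ⟶ X), mul T (inv T a) a = one T
  comp_mul : ∀ {T' T : Over (SpecK k)} (σ : T' ⟶ T) (a b : T ⟶ X),
    σ ≫ mul T a b = mul T' (σ ≫ a) (σ ≫ b)
  comp_one : ∀ {T' T : Over (SpecK k)} (σ : T' ⟶ T), σ ≫ one T = one T'
  comp_inv : ∀ {T' T : Over (SpecK k)} (σ : T' ⟶ T) (a : T ⟶ X),
    σ ≫ inv T a = inv T' (σ ≫ a)

variable {k : Type} [Field k]

/-- A homomorphism of algebraic groups over `k`. -/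
@[ext]
structure GroupSchemeHom (G G' : GroupScheme k) where
  hom : G.X ⟶ G'.X
  hom_mul : ∀ (T : Over (SpecK k)) (a b : T ⟶ G.X),
    G.mul T a b ≫ hom = G'.mul T (a ≫ hom) (b ≫ hom)

/-- An algebraic subgroup: a closed immersion of algebraic groups. -/
structure SubgroupOf (G : GroupScheme k) where
  grp : GroupScheme k
  emb : GroupSchemeHom grp G
  closed : IsClosedImmersion emb.hom.left

/-- A subgroup is epimorphic if morphisms of algebraic groups out of `G` are determined
by their restriction to the subgroup. -/
def IsEpimorphicSubgroup {G : GroupScheme k} (H : SubgroupOf G) : Prop :=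
  ∀ (G' : GroupScheme k) (f₁ f₂ : GroupSchemeHom G G'),
    H.emb.hom ≫ f₁.hom = H.emb.hom ≫ f₂.hom → f₁ = f₂

/-- `q : G ⟶ Q` is the (categorical) quotient of `G` by the right translation action of
the subgroup `H`. -/
structure IsQuotientBy (G : GroupScheme k) (H : SubgroupOf G) {Q : Over (SpecK k)}
    (q : G.X ⟶ Q) : Prop where
  invariant : ∀ (T : Over (SpecK k)) (g : T ⟶ G.X) (h : T ⟶ H.grp.X),
    G.mul T g (h ≫ H.emb.hom) ≫ q = g ≫ q
  universal : ∀ (Z : Over (SpecK k)) (f : G.X ⟶ Z),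
    (∀ (T : Over (SpecK k)) (g : T ⟶ G.X) (h : T ⟶ H.grp.X),
      G.mul T g (h ≫ H.emb.hom) ≫ f = g ≫ f) →
    ∃! f' : Q ⟶ Z, q ≫ f' = f

/-- A scheme over `k` has only constant global functions, i.e. `O(X) = k`. -/
def OnlyConstantFunctions (X : Over (SpecK k)) : Prop :=
  Function.Bijective (Scheme.Γ.map X.hom.op)


/-- `K ≤ H` as subgroups of `G`: the embedding of `K` factors through that of `H`. -/
def SubgroupLE {k : Type} [Field k] {G : GroupScheme k} (K H : SubgroupOf G) : Prop :=
  ∃ j : GroupSchemeHom K.grp H.grp, j.hom ≫ H.emb.hom = K.emb.hom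

/-- `A` is the largest anti-affine subgroup of `G`. -/
def IsLargestAntiAffineSubgroup {k : Type} [Field k] {G : GroupScheme k}
    (A : SubgroupOf G) : Prop :=
  OnlyConstantFunctions A.grp.X ∧
    ∀ B : SubgroupOf G, OnlyConstantFunctions B.grp.X → SubgroupLE B A

/-!
Write the inclusion of the anti-affine subgroup `A` into `G = N ⋊ H` as `(n, h)`. As `O(A) = k`
and `N` is affine, `n` is constant, and it is trivial at the unit of `A`; so `A` lies in `H`,
where it is anti-affine and hence contained in `H_ant`. Conversely `H_ant` is an anti-affine
subgroup of `G`, hence contained in `A`. Embeddings of subgroups are monomorphisms, so the two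
inclusions are mutually inverse.
-/

namespace GroupScheme

variable {G : GroupScheme k}

lemma eq_one_of_mul_self {T : Over (SpecK k)} {x : T ⟶ G.X} (hx : G.mul T x x = x) :
    x = G.one T := by
  have h := congrArg (G.mul T (G.inv T x)) hx
  rwa [← G.mul_assoc, G.inv_mul, G.one_mul] at h

end GroupScheme

namespace GroupSchemeHom

variable {G G' G'' : GroupScheme k}

lemma one_comp_hom (f : GroupSchemeHom G G') (T : Over (SpecK k)) :
    G.one T ≫ f.hom = G'.one T :=
  G'.eq_one_of_mul_self <| by rw [← f.hom_mul, G.mul_one]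

noncomputable def comp (f : GroupSchemeHom G G') (g : GroupSchemeHom G' G'') :
    GroupSchemeHom G G'' where
  hom := f.hom ≫ g.hom
  hom_mul T a b := by
    rw [← Category.assoc, f.hom_mul, g.hom_mul, Category.assoc, Category.assoc]

end GroupSchemeHom

lemma Over.mono_of_isClosedImmersion_left {S : Scheme} {X Y : Over S} (f : X ⟶ Y)
    [IsClosedImmersion f.left] : Mono f :=
  (Over.forget _).mono_of_mono_map (inferInstanceAs (Mono f.left))

namespace SubgroupOf

variable {G : GroupScheme k}

instance mono_emb_hom (H : SubgroupOf G) : Mono H.emb.hom :=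
  have := H.closed
  Over.mono_of_isClosedImmersion_left _

noncomputable def trans {H : SubgroupOf G} (K : SubgroupOf H.grp) : SubgroupOf G where
  grp := K.grp
  emb := K.emb.comp H.emb
  closed := by
    have := K.closed
    have := H.closed
    exact inferInstanceAs (IsClosedImmersion (K.emb.hom.left ≫ H.emb.hom.left))

noncomputable def restrict (A : SubgroupOf G) {H : SubgroupOf G} (h : A.grp.X ⟶ H.grp.X)
    (hh : h ≫ H.emb.hom = A.emb.hom) : SubgroupOf H.grp where
  grp := A.grp
  emb :=
    { hom := h
      hom_mul T a b := by
        rw [← cancel_mono H.emb.hom, Category.assoc, hh, A.emb.hom_mul, H.emb.hom_mul, ← hh]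
        simp only [Category.assoc] }
  closed := by
    have := H.closed
    have : IsClosedImmersion (h.left ≫ H.emb.hom.left) := by
      rw [← Over.comp_left, hh]; exact A.closed
    exact IsClosedImmersion.of_comp_isClosedImmersion h.left H.emb.hom.left

lemma isIso_of_comp_emb_eq {J K : SubgroupOf G} {u : J.grp.X ⟶ K.grp.X}
    {v : K.grp.X ⟶ J.grp.X} (hu : u ≫ K.emb.hom = J.emb.hom) (hv : v ≫ J.emb.hom = K.emb.hom) :
    IsIso u :=
  ⟨v, by rw [← cancel_mono J.emb.hom, Category.assoc, hv, hu, Category.id_comp],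
    by rw [← cancel_mono K.emb.hom, Category.assoc, hu, hv, Category.id_comp]⟩

end SubgroupOf

lemma OnlyConstantFunctions.from_comp_comp_eq_self {X Y : Over (SpecK k)} (hX : OnlyConstantFunctions X)
    [IsAffine Y.left] (e : Over.mk (𝟙 (SpecK k)) ⟶ X) (f : X ⟶ Y) :
    Over.mkIdTerminal.from X ≫ e ≫ f = f := by
  have : IsIso X.hom.appTop := (ConcreteCategory.isIso_iff_bijective _).mpr hX
  have hsection : e.left.appTop ≫ X.hom.appTop = 𝟙 _ := by
    rw [← cancel_epi X.hom.appTop, ← Category.assoc, ← Scheme.Hom.comp_appTop, Over.w e]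
    rfl
  ext : 1
  refine ext_of_isAffine ?_
  rw [Over.comp_left, Over.comp_left, Over.mkIdTerminal_from_left, Scheme.Hom.comp_appTop,
    Scheme.Hom.comp_appTop, Category.assoc, hsection, Category.comp_id]

def SubgroupOf.IsComplement {G : GroupScheme k} (N H : SubgroupOf G) : Prop :=
  ∀ (T : Over (SpecK k)) (g : T ⟶ G.X),
    ∃! p : (T ⟶ N.grp.X) × (T ⟶ H.grp.X), G.mul T (p.1 ≫ N.emb.hom) (p.2 ≫ H.emb.hom) = g

namespace SubgroupOf.IsComplement

variable {G : GroupScheme k} {N H : SubgroupOf G}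

lemma eq_one_of_mul_eq_one (hNH : IsComplement N H) {T : Over (SpecK k)}
    {n : T ⟶ N.grp.X} {h : T ⟶ H.grp.X}
    (hnh : G.mul T (n ≫ N.emb.hom) (h ≫ H.emb.hom) = G.one T) : n = N.grp.one T := by
  obtain ⟨p, -, huniq⟩ := hNH T (G.one T)
  have hp : (n, h) = p := huniq (n, h) hnh
  have hp₁ : (N.grp.one T, H.grp.one T) = p :=
    huniq _ (by simp only [GroupSchemeHom.one_comp_hom, G.one_mul])
  exact congrArg Prod.fst (hp.trans hp₁.symm)

lemma exists_comp_emb_eq_of_onlyConstantFunctions (hNH : IsComplement N H)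
    [IsAffine N.grp.X.left] {K : GroupScheme k} (f : GroupSchemeHom K G)
    (hK : OnlyConstantFunctions K.X) : ∃ h : K.X ⟶ H.grp.X, h ≫ H.emb.hom = f.hom := by
  obtain ⟨⟨n, h⟩, hfac, -⟩ := hNH K.X f.hom
  have hn_one : K.one (Over.mk (𝟙 _)) ≫ n = N.grp.one _ := by
    refine hNH.eq_one_of_mul_eq_one (h := K.one _ ≫ h) ?_
    rw [Category.assoc, Category.assoc, ← G.comp_mul, hfac, f.one_comp_hom]
  have hn : n = N.grp.one K.X := by
    rw [← hK.from_comp_comp_eq_self (K.one _) n, hn_one, N.grp.comp_one]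
  refine ⟨h, ?_⟩
  rw [← hfac, hn, N.emb.one_comp_hom, G.one_mul]

end SubgroupOf.IsComplement

/-- `G = N ⋊ H` is encoded by the unique factorization of every point of `G` as a point of `N`
times a point of `H`. -/
theorem ant_of_semidirect_product_eq_ant_of_factor_general
    {k : Type} [Field k] (G : GroupScheme k) (N H : SubgroupOf G)
    (hNaff : IsAffine N.grp.X.left)
    (hsemidirect : ∀ (T : Over (SpecK k)) (g : T ⟶ G.X),
      ∃! p : (T ⟶ N.grp.X) × (T ⟶ H.grp.X),
        G.mul T (p.1 ≫ N.emb.hom) (p.2 ≫ H.emb.hom) = g)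
    (A : SubgroupOf G) (hA : IsLargestAntiAffineSubgroup A)
    (B : SubgroupOf H.grp) (hB : IsLargestAntiAffineSubgroup B) :
    ∃ u : A.grp.X ⟶ B.grp.X, IsIso u ∧
      u ≫ B.emb.hom ≫ H.emb.hom = A.emb.hom := by
  have := hNaff
  obtain ⟨h, hh⟩ :=
    SubgroupOf.IsComplement.exists_comp_emb_eq_of_onlyConstantFunctions hsemidirect A.emb hA.1
  obtain ⟨u, hu⟩ := hB.2 (A.restrict h hh) hA.1
  obtain ⟨v, hv⟩ := hA.2 (SubgroupOf.trans B) hB.1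
  have hAB : u.hom ≫ B.emb.hom ≫ H.emb.hom = A.emb.hom := by
    rw [← Category.assoc, ← hh]
    exact congrArg (· ≫ H.emb.hom) hu
  exact ⟨u.hom, SubgroupOf.isIso_of_comp_emb_eq (K := .trans B) hAB hv, hAB⟩

/-- Let `G = N ⋊ H` be a semidirect product with `N` affine.  Then the largest
anti-affine subgroup of `G` is `H_ant`, embedded via `H`.  The semidirect product
structure is expressed by unique factorization of every point of `G` as a product of a
point of `N` and a point of `H`. -/
theorem ant_of_semidirect_product_eq_ant_of_factor
    {k : Type} [Field k] (G : GroupScheme k) (N H : SubgroupOf G)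
    (hNaff : IsAffine N.grp.X.left)
    (hNnormal : ∀ (T : Over (SpecK k)) (g : T ⟶ G.X) (n : T ⟶ N.grp.X),
      ∃ n' : T ⟶ N.grp.X,
        G.mul T (G.mul T g (n ≫ N.emb.hom)) (G.inv T g) = n' ≫ N.emb.hom)
    (hsemidirect : ∀ (T : Over (SpecK k)) (g : T ⟶ G.X),
      ∃! p : (T ⟶ N.grp.X) × (T ⟶ H.grp.X),
        G.mul T (p.1 ≫ N.emb.hom) (p.2 ≫ H.emb.hom) = g)
    (A : SubgroupOf G) (hA : IsLargestAntiAffineSubgroup A)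
    (B : SubgroupOf H.grp) (hB : IsLargestAntiAffineSubgroup B) :
    ∃ u : A.grp.X ⟶ B.grp.X, IsIso u ∧
      u ≫ B.emb.hom ≫ H.emb.hom = A.emb.hom :=
  ant_of_semidirect_product_eq_ant_of_factor_general G N H hNaff hsemidirect A hA B hB
end
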